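/- Let F : ℝ^n → ℝ^n be continuously differentiable, M : ℝ^n → Matrix (Fin n) (Fin n) ℝ continuously differentiable with M(x) symmetric positive definite, and λ > 0, such that for all x the matrix M(x)·DF(x) + DF(x)ᵀ·M(x) + Σᵢ Fᵢ(x)·(∂M/∂xᵢ)(x) + 2λM(x) is negative semidefinite. Let c : [0,1] × [0,∞) → ℝ^n be C², with ∂c/∂t(s,t) = F(c(s,t)) for all (s,t). Then the path energy E(t) = ∫₀¹ (∂c/∂s)(s,t)ᵀ M(c(s,t)) (∂c/∂s)(s,t) ds satisfies E(t) ≤ e^{−2λt}·E(0) for all t ≥ 0. -/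

import Mathlib

/-!
For fixed `s`, the tangent vector `δ(τ) = ∂c/∂s (s, τ)` solves the variational equation
`δ̇ = DF(c) δ`, because the mixed second partials of `c` commute and `∂c/∂t = F ∘ c`.
Differentiating `δᵀ M(c) δ` along the trajectory and using the contraction condition gives
`d/dτ (δᵀ M(c) δ) ≤ -2λ δᵀ M(c) δ`, so Grönwall's inequality yields the decay `e^{-2λt}`
pointwise in `s`; integrating over `s ∈ [0, 1]` gives the bound on the energy.
-/

open Matrix Set

/-- Partial derivative of a matrix-valued function `M` with respect to the `i`-th
coordinate of its argument, taken entrywise. -/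
noncomputable def matPartial {m n : ℕ} (M : (Fin m → ℝ) → Matrix (Fin n) (Fin n) ℝ)
    (i : Fin m) (σ : Fin m → ℝ) : Matrix (Fin n) (Fin n) ℝ :=
  Matrix.of fun j k => fderiv ℝ (fun σ' => M σ' j k) σ (Pi.single i 1)

/-- Jacobian matrix of a vector field `F : ℝⁿ → ℝⁿ` at `x`. -/
noncomputable def jacobian {n : ℕ} (F : (Fin n → ℝ) → (Fin n → ℝ)) (x : Fin n → ℝ) :
    Matrix (Fin n) (Fin n) ℝ :=
  Matrix.of fun i j => fderiv ℝ (fun y => F y i) x (Pi.single j 1)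

lemma ContinuousLinearMap.apply_eq_sum_mul_single {ι : Type*} [Fintype ι] [DecidableEq ι]
    (L : (ι → ℝ) →L[ℝ] ℝ) (v : ι → ℝ) : L v = ∑ i, v i * L (Pi.single i 1) := by
  conv_lhs => rw [pi_eq_sum_univ' v]
  simp [map_sum]

lemma jacobian_mulVec {n : ℕ} {F : (Fin n → ℝ) → (Fin n → ℝ)} {x : Fin n → ℝ}
    (hF : DifferentiableAt ℝ F x) (v : Fin n → ℝ) : jacobian F x *ᵥ v = fderiv ℝ F x v := by
  ext i
  rw [← ContinuousLinearMap.proj_apply (R := ℝ) i (fderiv ℝ F x v),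
    ← ContinuousLinearMap.comp_apply, ← fderiv_apply hF,
    ContinuousLinearMap.apply_eq_sum_mul_single]
  simp [jacobian, mulVec, dotProduct, mul_comm]

lemma HasDerivWithinAt.matrix_entry_comp {m n : ℕ}
    {M : (Fin m → ℝ) → Matrix (Fin n) (Fin n) ℝ}
    {x : ℝ → Fin m → ℝ} {v : Fin m → ℝ} {s : Set ℝ} {t : ℝ} {j k : Fin n}
    (hx : HasDerivWithinAt x v s t) (hM : DifferentiableAt ℝ (fun y => M y j k) (x t)) :
    HasDerivWithinAt (fun τ => M (x τ) j k) ((∑ i, v i • matPartial M i (x t)) j k) s t := by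
  have h := hM.hasFDerivAt.comp_hasDerivWithinAt t hx
  rw [ContinuousLinearMap.apply_eq_sum_mul_single] at h
  exact h.congr_deriv (by simp [matPartial, Matrix.sum_apply])

lemma HasDerivWithinAt.dotProduct_mulVec {ι : Type*} [Fintype ι] {δ : ℝ → ι → ℝ} {δ' : ι → ℝ}
    {m : ℝ → Matrix ι ι ℝ} {m' : Matrix ι ι ℝ} {s : Set ℝ} {t : ℝ}
    (hδ : HasDerivWithinAt δ δ' s t)
    (hm : ∀ j k, HasDerivWithinAt (fun τ => m τ j k) (m' j k) s t) :
    HasDerivWithinAt (fun τ => δ τ ⬝ᵥ (m τ *ᵥ δ τ))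
      (δ' ⬝ᵥ (m t *ᵥ δ t) + δ t ⬝ᵥ (m' *ᵥ δ t) + δ t ⬝ᵥ (m t *ᵥ δ')) s t := by
  have hδj (j : ι) : HasDerivWithinAt (fun τ => δ τ j) (δ' j) s t := hasDerivWithinAt_pi.1 hδ j
  have h := HasDerivWithinAt.fun_sum (u := Finset.univ) fun j _ => (hδj j).fun_mul
    (HasDerivWithinAt.fun_sum (u := Finset.univ) fun k _ => (hm j k).fun_mul (hδj k))
  refine h.congr_deriv ?_
  simp only [dotProduct, mulVec, mul_add, Finset.mul_sum, Finset.sum_add_distrib]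
  ring

lemma ContinuousOn.dotProduct_mulVec {X ι : Type*} [TopologicalSpace X] [Fintype ι]
    {v : X → ι → ℝ} {m : X → Matrix ι ι ℝ} {S : Set X} (hv : ContinuousOn v S)
    (hm : ContinuousOn m S) : ContinuousOn (fun x => v x ⬝ᵥ (m x *ᵥ v x)) S :=
  (continuous_fst.dotProduct (continuous_snd.matrix_mulVec continuous_fst)).comp_continuousOn
    (hv.prodMk hm)

lemma dotProduct_mulVec_mul_add_transpose_mul {ι R : Type*} [Fintype ι] [CommSemiring R]
    (A B : Matrix ι ι R) (v : ι → R) :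
    v ⬝ᵥ ((A * B + Bᵀ * A) *ᵥ v) = (B *ᵥ v) ⬝ᵥ (A *ᵥ v) + v ⬝ᵥ (A *ᵥ (B *ᵥ v)) := by
  rw [add_mulVec, dotProduct_add, ← mulVec_mulVec, ← mulVec_mulVec, dotProduct_mulVec v Bᵀ,
    vecMul_transpose, add_comm]

def IsContractionMetric {n : ℕ} (F : (Fin n → ℝ) → (Fin n → ℝ))
    (M : (Fin n → ℝ) → Matrix (Fin n) (Fin n) ℝ) (lam : ℝ) : Prop :=
  ∀ x, (-(M x * jacobian F x + (jacobian F x)ᵀ * M x +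
    (∑ i, F x i • matPartial M i x) + (2 * lam) • M x)).PosSemidef

namespace IsContractionMetric

variable {n : ℕ} {F : (Fin n → ℝ) → (Fin n → ℝ)} {M : (Fin n → ℝ) → Matrix (Fin n) (Fin n) ℝ}
  {lam : ℝ}

lemma quadForm_deriv_le (h : IsContractionMetric F M lam) (x v : Fin n → ℝ) :
    (jacobian F x *ᵥ v) ⬝ᵥ (M x *ᵥ v) + v ⬝ᵥ ((∑ i, F x i • matPartial M i x) *ᵥ v) +
        v ⬝ᵥ (M x *ᵥ (jacobian F x *ᵥ v)) ≤ -(2 * lam) * (v ⬝ᵥ (M x *ᵥ v)) := by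
  have h0 := (h x).dotProduct_mulVec_nonneg v
  rw [star_trivial, neg_mulVec, dotProduct_neg, add_mulVec, add_mulVec, dotProduct_add,
    dotProduct_add, dotProduct_mulVec_mul_add_transpose_mul, smul_mulVec, dotProduct_smul,
    smul_eq_mul] at h0
  linarith

lemma quadForm_le_exp_mul (h : IsContractionMetric F M lam) (hF : Differentiable ℝ F)
    (hM : ∀ j k, Differentiable ℝ fun x => M x j k) {x δ : ℝ → Fin n → ℝ}
    (hx : ∀ t ∈ Ici (0 : ℝ), HasDerivWithinAt x (F (x t)) (Ici 0) t)
    (hδ : ∀ t ∈ Ici (0 : ℝ), HasDerivWithinAt δ (fderiv ℝ F (x t) (δ t)) (Ici 0) t) :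
    ∀ t ∈ Ici (0 : ℝ), δ t ⬝ᵥ (M (x t) *ᵥ δ t) ≤
      Real.exp (-(2 * lam) * t) * (δ 0 ⬝ᵥ (M (x 0) *ᵥ δ 0)) := by
  set E : ℝ → ℝ := fun t => δ t ⬝ᵥ (M (x t) *ᵥ δ t)
  set E' : ℝ → ℝ := fun t => (jacobian F (x t) *ᵥ δ t) ⬝ᵥ (M (x t) *ᵥ δ t) +
    δ t ⬝ᵥ ((∑ i, F (x t) i • matPartial M i (x t)) *ᵥ δ t) +
    δ t ⬝ᵥ (M (x t) *ᵥ (jacobian F (x t) *ᵥ δ t))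
  have hE : ∀ t ∈ Ici (0 : ℝ), HasDerivWithinAt E (E' t) (Ici 0) t := by
    intro t ht
    simp only [E', jacobian_mulVec (hF _)]
    exact (hδ t ht).dotProduct_mulVec fun j k => (hx t ht).matrix_entry_comp (hM j k _)
  intro t ht
  have := le_gronwallBound_of_liminf_deriv_right_le (f := E) (f' := E') (δ := E 0)
    (K := -(2 * lam)) (ε := 0) (a := 0) (b := t) ?_ ?_ le_rfl ?_ t ⟨ht, le_rfl⟩
  · rwa [gronwallBound_ε0, sub_zero, mul_comm] at this
  · exact fun τ hτ => (hE τ hτ.1).continuousWithinAt.mono Icc_subset_Ici_self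
  · exact fun τ hτ _ hr => ((hE τ hτ.1).mono (Ici_subset_Ici.2 hτ.1)).liminf_right_slope_le hr
  · exact fun τ _ => (add_zero (-(2 * lam) * E τ)).symm ▸ h.quadForm_deriv_le (x τ) (δ τ)

end IsContractionMetric

section Slice

variable {E : Type*} [NormedAddCommGroup E] [NormedSpace ℝ E] {u : ℝ × ℝ → E}
  {L : ℝ × ℝ →L[ℝ] E} {A B : Set ℝ} {s t : ℝ}

lemma HasFDerivWithinAt.hasDerivWithinAt_fst_slice (hu : HasFDerivWithinAt u L (A ×ˢ B) (s, t))
    (ht : t ∈ B) : HasDerivWithinAt (fun σ => u (σ, t)) (L (1, 0)) A s :=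
  hu.comp_hasDerivWithinAt s ((hasDerivWithinAt_id s A).prodMk (hasDerivWithinAt_const s A t))
    fun _ hσ => mk_mem_prod hσ ht

lemma HasFDerivWithinAt.hasDerivWithinAt_snd_slice (hu : HasFDerivWithinAt u L (A ×ˢ B) (s, t))
    (hs : s ∈ A) : HasDerivWithinAt (fun τ => u (s, τ)) (L (0, 1)) B t :=
  hu.comp_hasDerivWithinAt t ((hasDerivWithinAt_const t B s).prodMk (hasDerivWithinAt_id t B))
    fun _ hτ => mk_mem_prod hs hτ

end Slice

section Flow

variable {E : Type*} [NormedAddCommGroup E] [NormedSpace ℝ E] {c : ℝ → ℝ → E} {A B : Set ℝ}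

lemma derivWithin_fst_slice_eq (hA : UniqueDiffOn ℝ A)
    (hc : DifferentiableOn ℝ (Function.uncurry c) (A ×ˢ B)) {s t : ℝ} (hs : s ∈ A)
    (ht : t ∈ B) :
    derivWithin (fun σ => c σ t) A s =
      fderivWithin ℝ (Function.uncurry c) (A ×ˢ B) (s, t) (1, 0) :=
  ((hc _ ⟨hs, ht⟩).hasFDerivWithinAt.hasDerivWithinAt_fst_slice ht).derivWithin (hA s hs)

lemma continuousOn_derivWithin_fst_slice (hA : UniqueDiffOn ℝ A) (hB : UniqueDiffOn ℝ B)
    (hc : ContDiffOn ℝ 1 (Function.uncurry c) (A ×ˢ B)) {t : ℝ} (ht : t ∈ B) :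
    ContinuousOn (fun σ => derivWithin (fun σ' => c σ' t) A σ) A := by
  have hg := (hc.continuousOn_fderivWithin (hA.prod hB) le_rfl).comp
    (continuous_id.prodMk continuous_const).continuousOn fun _ hσ => mk_mem_prod hσ ht
  exact ((ContinuousLinearMap.apply ℝ E ((1 : ℝ), (0 : ℝ))).continuous.comp_continuousOn
    hg).congr fun σ hσ => derivWithin_fst_slice_eq hA (hc.differentiableOn one_ne_zero) hσ ht

lemma hasDerivWithinAt_derivWithin_fst_slice_of_flow {F : E → E} (hF : Differentiable ℝ F)
    (hA : UniqueDiffOn ℝ A) (hB : UniqueDiffOn ℝ B)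
    (hAB : A ×ˢ B ⊆ closure (interior (A ×ˢ B)))
    (hc : ContDiffOn ℝ 2 (Function.uncurry c) (A ×ˢ B))
    (hflow : ∀ s ∈ A, ∀ t ∈ B, HasDerivWithinAt (fun τ => c s τ) (F (c s t)) B t)
    {s t : ℝ} (hs : s ∈ A) (ht : t ∈ B) :
    HasDerivWithinAt (fun τ => derivWithin (fun σ => c σ τ) A s)
      (fderiv ℝ F (c s t) (derivWithin (fun σ => c σ t) A s)) B t := by
  set S := A ×ˢ B
  set u := Function.uncurry c
  set g := fderivWithin ℝ u S
  have hp : (s, t) ∈ S := ⟨hs, ht⟩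
  have hS : UniqueDiffOn ℝ S := hA.prod hB
  have hdiff : DifferentiableOn ℝ u S := hc.differentiableOn (by norm_num)
  have hu : ∀ q ∈ S, HasFDerivWithinAt u (g q) S q := fun q hq =>
    (hdiff q hq).hasFDerivWithinAt
  have hg : HasFDerivWithinAt g (fderivWithin ℝ g S (s, t)) S (s, t) :=
    ((hc.fderivWithin hS (m := 1) (by norm_num)).differentiableOn one_ne_zero _
      hp).hasFDerivWithinAt
  set G := fderivWithin ℝ g S (s, t)
  have hgt : ∀ q ∈ S, g q (0, 1) = F (u q) := fun q hq =>
    (hB.uniqueDiffWithinAt hq.2).eq_deriv _ ((hu q hq).hasDerivWithinAt_snd_slice hq.1)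
      (hflow q.1 hq.1 q.2 hq.2)
  -- `p ↦ g p (0, 1)` agrees with `F ∘ u` on `S`, so both chain rules give its derivative
  have hmixed : G (1, 0) (0, 1) = fderiv ℝ F (u (s, t)) (g (s, t) (1, 0)) := by
    have h1 : HasFDerivWithinAt (fun q => g q (0, 1))
        ((ContinuousLinearMap.apply ℝ E ((0 : ℝ), (1 : ℝ))).comp G) S (s, t) :=
      (ContinuousLinearMap.apply ℝ E ((0 : ℝ), (1 : ℝ))).hasFDerivAt.comp_hasFDerivWithinAt _ hg
    have h2 : HasFDerivWithinAt (fun q => g q (0, 1)) ((fderiv ℝ F (u (s, t))).comp (g (s, t)))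
        S (s, t) :=
      ((hF _).hasFDerivAt.comp_hasFDerivWithinAt _ (hu _ hp)).congr hgt (hgt _ hp)
    exact congrArg (· (1, 0)) ((hS _ hp).eq h1 h2)
  have hsymm : G (0, 1) (1, 0) = G (1, 0) (0, 1) :=
    (hc.contDiffWithinAt hp).isSymmSndFDerivWithinAt (by simp) hS (hAB hp) hp _ _
  have hδ : HasDerivWithinAt (fun τ => g (s, τ) (1, 0)) (G (0, 1) (1, 0)) B t :=
    ((ContinuousLinearMap.apply ℝ E ((1 : ℝ), (0 : ℝ))).hasFDerivAt.comp_hasFDerivWithinAt _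
      hg).hasDerivWithinAt_snd_slice hs
  rw [hsymm, hmixed, ← derivWithin_fst_slice_eq hA hdiff hs ht] at hδ
  exact hδ.congr (fun τ hτ => derivWithin_fst_slice_eq hA hdiff hs hτ)
    (derivWithin_fst_slice_eq hA hdiff hs ht)

end Flow

theorem flowed_path_energy_decay_general {n : ℕ}
    (F : (Fin n → ℝ) → (Fin n → ℝ)) (hF : ContDiff ℝ 1 F)
    (M : (Fin n → ℝ) → Matrix (Fin n) (Fin n) ℝ)
    (hMC1 : ∀ j k, ContDiff ℝ 1 fun x => M x j k)
    (lam : ℝ)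
    (hLMI : ∀ x : Fin n → ℝ,
      (-(M x * jacobian F x + (jacobian F x)ᵀ * M x +
          (∑ i, F x i • matPartial M i x) + (2 * lam) • M x)).PosSemidef)
    (c : ℝ → ℝ → (Fin n → ℝ))
    (hc : ContDiffOn ℝ 2 (Function.uncurry c) (Icc 0 1 ×ˢ Ici 0))
    (hflow : ∀ s ∈ Icc (0 : ℝ) 1, ∀ t ∈ Ici (0 : ℝ),
      HasDerivWithinAt (fun τ => c s τ) (F (c s t)) (Ici 0) t) :
    ∀ t ∈ Ici (0 : ℝ),
      (∫ s in (0 : ℝ)..1,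
          (derivWithin (fun σ => c σ t) (Icc 0 1) s) ⬝ᵥ
            (M (c s t) *ᵥ derivWithin (fun σ => c σ t) (Icc 0 1) s)) ≤
        Real.exp (-(2 * lam) * t) *
          (∫ s in (0 : ℝ)..1,
            (derivWithin (fun σ => c σ 0) (Icc 0 1) s) ⬝ᵥ
              (M (c s 0) *ᵥ derivWithin (fun σ => c σ 0) (Icc 0 1) s)) := by
  intro t ht
  have hA : UniqueDiffOn ℝ (Icc (0 : ℝ) 1) := uniqueDiffOn_Icc one_pos
  have hB : UniqueDiffOn ℝ (Ici (0 : ℝ)) := uniqueDiffOn_Ici 0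
  have hAB : Icc (0 : ℝ) 1 ×ˢ Ici (0 : ℝ) ⊆ closure (interior (Icc 0 1 ×ˢ Ici 0)) := by
    rw [interior_prod_eq, interior_Icc, interior_Ici, closure_prod_eq, closure_Ioo zero_ne_one,
      closure_Ioi]
  have hdensity : ∀ τ ∈ Ici (0 : ℝ), ContinuousOn
      (fun s => derivWithin (fun σ => c σ τ) (Icc 0 1) s ⬝ᵥ
        (M (c s τ) *ᵥ derivWithin (fun σ => c σ τ) (Icc 0 1) s)) (Icc 0 1) := fun τ hτ =>
    (continuousOn_derivWithin_fst_slice hA hB (hc.of_le one_le_two) hτ).dotProduct_mulVec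
      ((continuous_matrix fun j k => (hMC1 j k).continuous).comp_continuousOn
        (hc.continuousOn.comp (continuous_id.prodMk continuous_const).continuousOn
          fun _ hs => mk_mem_prod hs hτ))
  rw [← intervalIntegral.integral_const_mul]
  refine intervalIntegral.integral_mono_on zero_le_one
    ((hdensity t ht).intervalIntegrable_of_Icc zero_le_one)
    (((hdensity 0 self_mem_Ici).const_mul _).intervalIntegrable_of_Icc zero_le_one) fun s hs => ?_
  exact IsContractionMetric.quadForm_le_exp_mul hLMI (hF.differentiable one_ne_zero)
    (fun j k => (hMC1 j k).differentiable one_ne_zero) (hflow s hs)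
    (fun τ hτ => hasDerivWithinAt_derivWithin_fst_slice_of_flow (hF.differentiable one_ne_zero)
      hA hB hAB hc hflow hs hτ) t ht

/-- **Exponential decay of path energy (inequality (28) of the paper).** If `M` satisfies
the contraction condition with rate `λ` for `ẋ = F(x)` and `c(s,t)` is a `C²` family of
curves each of whose points flows along `F` in `t`, then the Riemannian energy
`E(t) = ∫₀¹ c_sᵀ M(c) c_s ds` of the flowed path satisfies `E(t) ≤ e^{-2λt} E(0)`. -/
theorem flowed_path_energy_decay {n : ℕ}
    (F : (Fin n → ℝ) → (Fin n → ℝ)) (hF : ContDiff ℝ 1 F)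
    (M : (Fin n → ℝ) → Matrix (Fin n) (Fin n) ℝ)
    (hMC1 : ∀ j k, ContDiff ℝ 1 fun x => M x j k)
    (hMpos : ∀ x, (M x).PosDef)
    (lam : ℝ) (hlam : 0 < lam)
    (hLMI : ∀ x : Fin n → ℝ,
      (-(M x * jacobian F x + (jacobian F x)ᵀ * M x +
          (∑ i, F x i • matPartial M i x) + (2 * lam) • M x)).PosSemidef)
    (c : ℝ → ℝ → (Fin n → ℝ))
    (hc : ContDiffOn ℝ 2 (Function.uncurry c) (Icc 0 1 ×ˢ Ici 0))
    (hflow : ∀ s ∈ Icc (0 : ℝ) 1, ∀ t ∈ Ici (0 : ℝ),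
      HasDerivWithinAt (fun τ => c s τ) (F (c s t)) (Ici 0) t) :
    ∀ t ∈ Ici (0 : ℝ),
      (∫ s in (0 : ℝ)..1,
          (derivWithin (fun σ => c σ t) (Icc 0 1) s) ⬝ᵥ
            (M (c s t) *ᵥ derivWithin (fun σ => c σ t) (Icc 0 1) s)) ≤
        Real.exp (-(2 * lam) * t) *
          (∫ s in (0 : ℝ)..1,
            (derivWithin (fun σ => c σ 0) (Icc 0 1) s) ⬝ᵥ
              (M (c s 0) *ᵥ derivWithin (fun σ => c σ 0) (Icc 0 1) s)) :=
  flowed_path_energy_decay_general F hF M hMC1 lam hLMI c hc hflow
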